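/- For Nesterov's accelerated method with modal dynamics Â(λ) = [[0,1],[-β(1-αλ), (1+β)(1-αλ)]], the modal variance amplification is Ĵ_na(λ) = σ²(1 + β(1-αλ))/(αλ(1 - β(1-αλ))(2(1+β) - (2β+1)αλ)) for all stabilizing parameters. -/

import Mathlib

open Matrix

/-!
Writing `a = (1+β)(1-αλ)` and `b = β(1-αλ)`, the modal matrix is the companion matrix of the
AR(2) recursion `x_{k+2} = a x_{k+1} - b x_k + σ w_k`, and `Ĵ_na(λ)` is its stationary variance
`σ²(1+b)/((1-b)((1+b)² - a²))`. The formula follows from `1 + b - a = αλ` and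
`1 + b + a = 2(1+β) - (2β+1)αλ`; stability makes all three factors of the denominator positive.
-/

section Companion

variable {K : Type*} [Field K] {a b s : K} {P : Matrix (Fin 2) (Fin 2) K}

theorem companion_lyapunov_entries
    (hP : P = !![0, 1; -b, a] * P * (!![0, 1; -b, a])ᵀ + s • (!![(0 : K); 1] * (!![(0 : K); 1])ᵀ)) :
    P 0 0 = P 1 1 ∧ P 0 1 = -b * P 1 0 + a * P 1 1 ∧ P 1 0 = -b * P 0 1 + a * P 1 1 ∧
      P 1 1 = b ^ 2 * P 0 0 - a * b * (P 0 1 + P 1 0) + a ^ 2 * P 1 1 + s := by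
  have h := congrFun₂ hP
  have h00 := h 0 0
  have h01 := h 0 1
  have h10 := h 1 0
  have h11 := h 1 1
  simp [Matrix.mul_apply, Fin.sum_univ_two, Matrix.vecMul, dotProduct] at h00 h01 h10 h11
  exact ⟨by linear_combination h00, by linear_combination h01, by linear_combination h10,
    by linear_combination h11⟩

theorem companion_lyapunov_symm (hb : b ≠ 1)
    (hP : P = !![0, 1; -b, a] * P * (!![0, 1; -b, a])ᵀ + s • (!![(0 : K); 1] * (!![(0 : K); 1])ᵀ)) :
    P 0 1 = P 1 0 := by
  obtain ⟨-, h01, h10, -⟩ := companion_lyapunov_entries hP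
  have h : (1 - b) * (P 0 1 - P 1 0) = 0 := by linear_combination h01 - h10
  simpa [sub_eq_zero, Ne.symm hb] using h

theorem companion_lyapunov_apply_zero_zero (hb : b ≠ 1)
    (hP : P = !![0, 1; -b, a] * P * (!![0, 1; -b, a])ᵀ + s • (!![(0 : K); 1] * (!![(0 : K); 1])ᵀ)) :
    P 0 0 * ((1 - b) * ((1 + b) ^ 2 - a ^ 2)) = (1 + b) * s := by
  obtain ⟨h00, h01, -, h11⟩ := companion_lyapunov_entries hP
  have hsymm := companion_lyapunov_symm hb hP
  -- `(1 + b) • h11`, after eliminating `P 1 1 = P 0 0` and `(1 + b) P 0 1 = a P 0 0`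
  linear_combination (1 + b) * h11 + ((1 + b) * (1 - a ^ 2) + 2 * a ^ 2 * b) * h00 - 2 * a * b * h01
    + a * b * (1 - b) * hsymm

end Companion

/-- Modal variance amplification of Nesterov's accelerated method: the (1,1)
entry of the solution of the 2×2 Lyapunov equation for
`Â = [[0,1],[-β(1-αλ), (1+β)(1-αλ)]]`, `B̂ = (0,1)ᵀ` equals
`σ²(1+β(1-αλ))/(αλ(1-β(1-αλ))(2(1+β)-(2β+1)αλ))` for all stabilizing
parameters (`0 ≤ β < 1`, `0 < αλ < 2(1+β)/(2β+1)`). -/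
theorem stmt_3 (α β lam σ : ℝ) (hβ0 : 0 ≤ β) (hβ1 : β < 1)
    (h1 : 0 < α * lam) (h2 : α * lam < 2 * (1 + β) / (2 * β + 1))
    (P : Matrix (Fin 2) (Fin 2) ℝ)
    (hlyap : P = !![0, 1; -β * (1 - α * lam), (1 + β) * (1 - α * lam)] * P *
          (!![0, 1; -β * (1 - α * lam), (1 + β) * (1 - α * lam)])ᵀ
        + σ ^ 2 • (!![(0 : ℝ); 1] * (!![(0 : ℝ); 1])ᵀ)) :
    P 0 0 = σ ^ 2 * (1 + β * (1 - α * lam)) /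
      (α * lam * (1 - β * (1 - α * lam)) * (2 * (1 + β) - (2 * β + 1) * (α * lam))) := by
  have hlt : α * lam * (2 * β + 1) < 2 * (1 + β) := (lt_div_iff₀ (by linarith)).mp h2
  have hb : 0 < 1 - β * (1 - α * lam) := by nlinarith
  have hc : 0 < 2 * (1 + β) - (2 * β + 1) * (α * lam) := by linarith
  have hvar := companion_lyapunov_apply_zero_zero (a := (1 + β) * (1 - α * lam))
    (b := β * (1 - α * lam)) (by linarith) (by simpa only [neg_mul] using hlyap)
  rw [eq_div_iff (by positivity)]
  linear_combination hvar
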